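/- Bisimulations between labelled transition systems are exactly ≡^τ-simulations between multi-transition systems: let Mul : Type u ⥤ Type u be the multiset functor (object map X ↦ Multiset X, action Multiset.map) and Pf : Type u ⥤ Type u the finite powerset functor (object map X ↦ Finset X, action Finset.image with classical decidable equality), and let τ : Mul ⟶ Pf be the natural transformation with components Multiset.toFinset. Given Finset-coalgebras b₁ : X₁ → Finset X₁ and b₂ : X₂ → Finset X₂ and any multiset coalgebras a₁ : X₁ → Multiset X₁, a₂ : X₂ → Multiset X₂ with (a₁ x).toFinset = b₁ x and (a₂ y).toFinset = b₂ y for all x, y, a relation R : X₁ → X₂ → Prop is a Pf-bisimulation between b₁ and b₂ iff it is a ≡^τ-simulation between a₁ and a₂. -/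

import Mathlib

open CategoryTheory

universe u

/-- Relation lifting `Rel(F)(R)`. -/
def RelLift (F : Type u ⥤ Type u) {X Y : Type u} (R : X → Y → Prop)
    (u : F.obj X) (v : F.obj Y) : Prop :=
  ∃ w : F.obj {p : X × Y // R p.1 p.2},
    F.map (TypeCat.ofHom (fun p : {p : X × Y // R p.1 p.2} => p.1.1)) w = u ∧
      F.map (TypeCat.ofHom (fun p : {p : X × Y // R p.1 p.2} => p.1.2)) w = v

/-- `R` is an `F`-bisimulation between coalgebras `c` and `d`. -/
def IsBisimulation (F : Type u ⥤ Type u) {X Y : Type u}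
    (c : X → F.obj X) (d : Y → F.obj Y) (R : X → Y → Prop) : Prop :=
  ∀ x y, R x y → RelLift F R (c x) (d y)

/-- Order-enriched relation lifting `Rel(F)_⊑(R)`. -/
def RelLiftOrd (F : Type u ⥤ Type u) (r : ∀ X : Type u, F.obj X → F.obj X → Prop)
    {X Y : Type u} (R : X → Y → Prop) (u : F.obj X) (v : F.obj Y) : Prop :=
  ∃ w : F.obj {p : X × Y // R p.1 p.2},
    r X u (F.map (TypeCat.ofHom (fun p : {p : X × Y // R p.1 p.2} => p.1.1)) w) ∧
      r Y (F.map (TypeCat.ofHom (fun p : {p : X × Y // R p.1 p.2} => p.1.2)) w) v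

/-- `R` is a `⊑`-simulation between coalgebras `c` and `d`. -/
def IsSimulation (F : Type u ⥤ Type u) (r : ∀ X : Type u, F.obj X → F.obj X → Prop)
    {X Y : Type u} (c : X → F.obj X) (d : Y → F.obj Y) (R : X → Y → Prop) : Prop :=
  ∀ x y, R x y → RelLiftOrd F r R (c x) (d y)

/-- The kernel equivalence `≡^α` of a natural transformation `α : F ⟶ G`. -/
def kernelRel {F G : Type u ⥤ Type u} (α : F ⟶ G) (X : Type u) :
    F.obj X → F.obj X → Prop :=
  fun u u' => α.app X u = α.app X u'

/-- `r` is an order on the functor `F`: a functorial family of preorders. -/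
def IsFunctorOrder (F : Type u ⥤ Type u)
    (r : ∀ X : Type u, F.obj X → F.obj X → Prop) : Prop :=
  (∀ (X : Type u) (u : F.obj X), r X u u) ∧
  (∀ (X : Type u) (u v w : F.obj X), r X u v → r X v w → r X u w) ∧
  (∀ (X Y : Type u) (f : X → Y) (u u' : F.obj X), r X u u' → r Y (F.map (TypeCat.ofHom f) u) (F.map (TypeCat.ofHom f) u'))

open scoped Classical

/-- The multiset endofunctor. -/
def MSetF : Type u ⥤ Type u where
  obj X := Multiset X
  map f := TypeCat.ofHom (Multiset.map f)
  map_id := by intro X; ext M; simp [types_id]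
  map_comp := by intro X Y Z f g; ext M; simp [types_comp]

/-- The finite powerset endofunctor (with classical decidable equality). -/
noncomputable def PFinF : Type u ⥤ Type u where
  obj X := Finset X
  map f := TypeCat.ofHom (fun s : Finset _ => s.image f)
  map_id := by intro X; ext s; simp [types_id]
  map_comp := by intro X Y Z f g; ext s; simp [types_comp, Finset.image_image]

/-- The natural transformation `τ : MSetF ⟶ PFinF` given by the support of a multiset. -/
noncomputable def tauSupp : MSetF.{u} ⟶ PFinF.{u} where
  app X := TypeCat.ofHom (fun M : Multiset X => M.toFinset)
  naturality := by
    intro X Y f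
    ext M
    change (Multiset.map (f : X → Y) (M : Multiset X)).toFinset =
      (Multiset.toFinset (M : Multiset X)).image (f : X → Y)
    ext y
    simp only [Multiset.mem_toFinset, Finset.mem_image]
    constructor
    · intro h
      obtain ⟨a, ha, rfl⟩ := Multiset.mem_map.1 h
      exact ⟨a, Multiset.mem_toFinset.2 ha, rfl⟩
    · rintro ⟨a, ha, rfl⟩
      exact Multiset.mem_map.2 ⟨a, Multiset.mem_toFinset.1 ha, rfl⟩

/-!
Naturality of `τ : F ⟶ G` turns a `≡^τ`-witness `w : F.obj ⟨R⟩` into the `G`-witness `τ w`, and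
surjectivity of `τ` lifts every `G`-witness back to `F`. Hence, for such `τ`, the `≡^τ`-simulations
between `F`-coalgebras are exactly the `G`-bisimulations between their images under `τ`. The
support map `Multiset.toFinset` is such a transformation, since every finset is the support of
its underlying multiset.
-/

section KernelSimulation

variable {F G : Type u ⥤ Type u} (τ : F ⟶ G)

theorem relLiftOrd_kernelRel_iff (hτ : ∀ X, Function.Surjective (τ.app X))
    {X Y : Type u} (R : X → Y → Prop) (u : F.obj X) (v : F.obj Y) :
    RelLiftOrd F (kernelRel τ) R u v ↔ RelLift G R (τ.app X u) (τ.app Y v) := by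
  simp only [RelLiftOrd, RelLift, kernelRel, NatTrans.naturality_apply]
  constructor
  · rintro ⟨w, hu, hv⟩
    exact ⟨τ.app _ w, hu.symm, hv⟩
  · rintro ⟨w', hu, hv⟩
    obtain ⟨w, rfl⟩ := hτ _ w'
    exact ⟨w, hu.symm, hv⟩

theorem isSimulation_kernelRel_iff (hτ : ∀ X, Function.Surjective (τ.app X))
    {X Y : Type u} (c : X → F.obj X) (d : Y → F.obj Y) (R : X → Y → Prop) :
    IsSimulation F (kernelRel τ) c d R ↔
      IsBisimulation G (fun x => τ.app X (c x)) (fun y => τ.app Y (d y)) R := by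
  simp only [IsSimulation, IsBisimulation, relLiftOrd_kernelRel_iff τ hτ]

end KernelSimulation

theorem tauSupp_app_surjective (X : Type u) : Function.Surjective (tauSupp.app X) :=
  fun s => ⟨s.val, Finset.val_toFinset s⟩

/-- bisimulations between labelled transition systems are exactly
`≡^τ`-simulations between multi-transition systems representing them. -/
theorem finset_bisim_iff_multiset_kernel_simulation {X₁ X₂ : Type u}
    (b₁ : X₁ → Finset X₁) (b₂ : X₂ → Finset X₂)
    (a₁ : X₁ → Multiset X₁) (a₂ : X₂ → Multiset X₂)
    (h₁ : ∀ x, (a₁ x).toFinset = b₁ x) (h₂ : ∀ y, (a₂ y).toFinset = b₂ y)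
    (R : X₁ → X₂ → Prop) :
    IsBisimulation PFinF b₁ b₂ R ↔ IsSimulation MSetF (kernelRel tauSupp) a₁ a₂ R := by
  obtain rfl : b₁ = fun x => tauSupp.app X₁ (a₁ x) := funext fun x => (h₁ x).symm
  obtain rfl : b₂ = fun y => tauSupp.app X₂ (a₂ y) := funext fun y => (h₂ y).symm
  exact (isSimulation_kernelRel_iff tauSupp tauSupp_app_surjective a₁ a₂ R).symm
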